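/- arXiv:2012.01945 — 5 statements merged into one kernel-verified Lean document; each statement's English description precedes it below -/
import Mathlib

section
/- With Y and P defined from a finite question set Q with truthful answers for a target set T: if Q_Yes is nonempty, then Y ∩ P ≠ ∅. -/
/-!
Take a Yes-question `q` that is maximal for `→` among all Yes-questions; it exists because `V`
is finite. Then `q ∈ Y` by reflexivity. No No-question `q'` is an ancestor of `q`, since
`q' → q → t` would make `q'` a Yes-question. And `q` is not a strict ancestor of a Yes-question
`q'`, by maximality and antisymmetry. Hence `q ∈ Y ∩ P`.
-/

section
variable {V : Type*} (R : V → V → Prop)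

def Reaches (T : Set V) (q : V) : Prop := ∃ t ∈ T, R q t

def yesCandidates (T Q : Set V) : Set V :=
  ⋃ q ∈ {q ∈ Q | Reaches R T q}, {u | R u q}

def potentialTargets (T Q : Set V) : Set V :=
  Set.univ \ ((⋃ q ∈ {q ∈ Q | ¬ Reaches R T q}, {u | R q u}) ∪
    (⋃ q ∈ {q ∈ Q | Reaches R T q}, ({u | R u q} \ {q})))

theorem Set.Finite.exists_rel_maximal {S : Set V} (hrefl : ∀ v, R v v)
    (htrans : ∀ u v w, R u v → R v w → R u w) (hanti : ∀ u v, R u v → R v u → u = v)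
    (hfin : S.Finite) (hne : S.Nonempty) : ∃ m ∈ S, ∀ s ∈ S, R m s → m = s := by
  let _ : PartialOrder V :=
    { le := R, le_refl := hrefl, le_trans := htrans, le_antisymm := hanti }
  obtain ⟨m, hm⟩ := hfin.exists_maximal hne
  exact ⟨m, hm.prop, fun s hs hms => hm.eq_of_le hs hms⟩

theorem reaches_of_rel {T : Set V} (htrans : ∀ u v w, R u v → R v w → R u w) {u v : V}
    (huv : R u v) (hv : Reaches R T v) : Reaches R T u :=
  let ⟨t, ht, hvt⟩ := hv
  ⟨t, ht, htrans u v t huv hvt⟩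

theorem mem_yesCandidates {T Q : Set V} (hrefl : ∀ v, R v v) {q : V}
    (hq : q ∈ {q ∈ Q | Reaches R T q}) : q ∈ yesCandidates R T Q :=
  Set.mem_biUnion hq (hrefl q)

theorem mem_potentialTargets_of_maximal {T Q : Set V}
    (htrans : ∀ u v w, R u v → R v w → R u w) {q : V} (hq : q ∈ {q ∈ Q | Reaches R T q})
    (hmax : ∀ q' ∈ {q ∈ Q | Reaches R T q}, R q q' → q = q') :
    q ∈ potentialTargets R T Q := by
  refine ⟨trivial, ?_⟩
  simp only [Set.mem_union, Set.mem_iUnion, Set.mem_sdiff, Set.mem_ofPred_eq,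
    Set.mem_singleton_iff]
  rintro (⟨q', ⟨-, hq'No⟩, hq'q⟩ | ⟨q', hq'Yes, hqq', hne⟩)
  · exact hq'No (reaches_of_rel R htrans hq'q hq.2)
  · exact hne (hmax q' hq'Yes hqq')

end

theorem stmt2_general {V : Type*} [Fintype V] (R : V → V → Prop)
    (hrefl : ∀ v, R v v)
    (htrans : ∀ u v w, R u v → R v w → R u w)
    (hanti : ∀ u v, R u v → R v u → u = v)
    (T : Set V)
    (Q : Set V)
    (hQYes : {q ∈ Q | ∃ t ∈ T, R q t}.Nonempty) :
    (⋃ q ∈ {q ∈ Q | ∃ t ∈ T, R q t}, {u | R u q}) ∩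
      (Set.univ \ ((⋃ q ∈ {q ∈ Q | ¬ ∃ t ∈ T, R q t}, {u | R q u}) ∪
        (⋃ q ∈ {q ∈ Q | ∃ t ∈ T, R q t}, ({u | R u q} \ {q})))) ≠ (∅ : Set V) := by
  obtain ⟨q, hq, hmax⟩ :=
    (Set.toFinite {q ∈ Q | Reaches R T q}).exists_rel_maximal R hrefl htrans hanti hQYes
  exact Set.nonempty_iff_ne_empty.mp
    ⟨q, mem_yesCandidates R hrefl hq, mem_potentialTargets_of_maximal R htrans hq hmax⟩

/-- With the Yes-candidates `Y = ⋃_{q ∈ Q_Yes} anc(q)` and potential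
targets `P = V \ ((⋃_{q ∈ Q_No} des(q)) ∪ (⋃_{q ∈ Q_Yes} anc(q) \ {q}))` defined from a
finite question set `Q` with truthful answers for a target set `T`: if `Q_Yes` is
nonempty, then `Y ∩ P ≠ ∅`. -/
theorem stmt2 {V : Type*} [Fintype V] (R : V → V → Prop) (r : V)
    (hrefl : ∀ v, R v v)
    (htrans : ∀ u v w, R u v → R v w → R u w)
    (hanti : ∀ u v, R u v → R v u → u = v)
    (hroot : ∀ v, R r v)
    (hchain : ∀ u v w, R u v → R w v → R u w ∨ R w u)
    (T : Set V) (hT : ∀ t ∈ T, ∀ t' ∈ T, t ≠ t' → ¬ R t t')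
    (Q : Set V)
    (hQYes : {q ∈ Q | ∃ t ∈ T, R q t}.Nonempty) :
    (⋃ q ∈ {q ∈ Q | ∃ t ∈ T, R q t}, {u | R u q}) ∩
      (Set.univ \ ((⋃ q ∈ {q ∈ Q | ¬ ∃ t ∈ T, R q t}, {u | R q u}) ∪
        (⋃ q ∈ {q ∈ Q | ∃ t ∈ T, R q t}, ({u | R u q} \ {q})))) ≠ (∅ : Set V) :=
  stmt2_general R hrefl htrans hanti T Q hQYes
end

section
/- With Y and P defined from a finite question set Q with truthful answers for a target set T: if P ⊆ Y, then the targets are exactly the potential targets, i.e., T = P. -/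
/-!
Every potential target `p` lies below some Yes-question `q`, and `p` is not a proper ancestor of
`q`, so `p = q`: potential targets are Yes-questions. Targets are always potential targets, by
the antichain property. Hence a potential target `p` reaches some target `t`, which is itself a
Yes-question, and since `p` is not a proper ancestor of `t`, `p = t`.
-/

namespace TargetSearch

variable {V : Type*} (R : V → V → Prop) (T Q : Set V)

def yesQuestions : Set V := {q ∈ Q | ∃ t ∈ T, R q t}

def noQuestions : Set V := {q ∈ Q | ¬ ∃ t ∈ T, R q t}

def yesCandidates : Set V := ⋃ q ∈ yesQuestions R T Q, {u | R u q}

def potentialTargets : Set V :=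
  Set.univ \ ((⋃ q ∈ noQuestions R T Q, {u | R q u}) ∪
    (⋃ q ∈ yesQuestions R T Q, ({u | R u q} \ {q})))

variable {R T Q}

theorem eq_of_mem_potentialTargets {p q : V} (hp : p ∈ potentialTargets R T Q)
    (hq : q ∈ yesQuestions R T Q) (hpq : R p q) : p = q := by
  by_contra hne
  exact hp.2 (Or.inr (Set.mem_biUnion hq ⟨hpq, hne⟩))

theorem subset_potentialTargets (htrans : ∀ u v w, R u v → R v w → R u w)
    (hanti : ∀ u v, R u v → R v u → u = v) (hT : IsAntichain R T) :
    T ⊆ potentialTargets R T Q := by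
  intro t ht
  refine ⟨trivial, ?_⟩
  rintro (hNo | hYes)
  · obtain ⟨q, ⟨-, hunreach⟩, hqt⟩ := Set.mem_iUnion₂.1 hNo
    exact hunreach ⟨t, ht, hqt⟩
  · obtain ⟨q, ⟨-, t', ht', hqt'⟩, htq, hne⟩ := Set.mem_iUnion₂.1 hYes
    obtain rfl | htt' := eq_or_ne t t'
    · exact hne (hanti t q htq hqt')
    · exact hT ht ht' htt' (htrans t q t' htq hqt')

theorem mem_yesQuestions_of_mem_potentialTargets
    (hPY : potentialTargets R T Q ⊆ yesCandidates R T Q) {p : V}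
    (hp : p ∈ potentialTargets R T Q) : p ∈ yesQuestions R T Q := by
  obtain ⟨q, hq, hpq⟩ := Set.mem_iUnion₂.1 (hPY hp)
  rwa [eq_of_mem_potentialTargets hp hq hpq]

theorem eq_potentialTargets_of_subset_yesCandidates
    (htrans : ∀ u v w, R u v → R v w → R u w) (hanti : ∀ u v, R u v → R v u → u = v)
    (hT : IsAntichain R T) (hPY : potentialTargets R T Q ⊆ yesCandidates R T Q) :
    T = potentialTargets R T Q := by
  have hTP := subset_potentialTargets (Q := Q) htrans hanti hT
  refine hTP.antisymm fun p hp => ?_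
  obtain ⟨-, t, ht, hpt⟩ := mem_yesQuestions_of_mem_potentialTargets hPY hp
  have htYes := mem_yesQuestions_of_mem_potentialTargets hPY (hTP ht)
  rwa [eq_of_mem_potentialTargets hp htYes hpt]

end TargetSearch

theorem stmt5_general {V : Type*} (R : V → V → Prop)
    (htrans : ∀ u v w, R u v → R v w → R u w)
    (hanti : ∀ u v, R u v → R v u → u = v)
    (T : Set V) (hT : ∀ t ∈ T, ∀ t' ∈ T, t ≠ t' → ¬ R t t')
    (Q : Set V)
    (hPY : Set.univ \ ((⋃ q ∈ {q ∈ Q | ¬ ∃ t ∈ T, R q t}, {u | R q u}) ∪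
        (⋃ q ∈ {q ∈ Q | ∃ t ∈ T, R q t}, ({u | R u q} \ {q}))) ⊆
      ⋃ q ∈ {q ∈ Q | ∃ t ∈ T, R q t}, {u | R u q}) :
    T = Set.univ \ ((⋃ q ∈ {q ∈ Q | ¬ ∃ t ∈ T, R q t}, {u | R q u}) ∪
        (⋃ q ∈ {q ∈ Q | ∃ t ∈ T, R q t}, ({u | R u q} \ {q}))) :=
  TargetSearch.eq_potentialTargets_of_subset_yesCandidates htrans hanti hT hPY

/-- With `Y = ⋃_{q ∈ Q_Yes} anc(q)` and
`P = V \ ((⋃_{q ∈ Q_No} des(q)) ∪ (⋃_{q ∈ Q_Yes} anc(q) \ {q}))` defined from a finite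
question set `Q` with truthful answers for a target set `T`: if `P ⊆ Y`, then the
targets are exactly the potential targets, i.e. `T = P`. -/
theorem stmt5 {V : Type*} [Fintype V] (R : V → V → Prop) (r : V)
    (hrefl : ∀ v, R v v)
    (htrans : ∀ u v w, R u v → R v w → R u w)
    (hanti : ∀ u v, R u v → R v u → u = v)
    (hroot : ∀ v, R r v)
    (hchain : ∀ u v w, R u v → R w v → R u w ∨ R w u)
    (T : Set V) (hT : ∀ t ∈ T, ∀ t' ∈ T, t ≠ t' → ¬ R t t')
    (Q : Set V)
    (hPY : Set.univ \ ((⋃ q ∈ {q ∈ Q | ¬ ∃ t ∈ T, R q t}, {u | R q u}) ∪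
        (⋃ q ∈ {q ∈ Q | ∃ t ∈ T, R q t}, ({u | R u q} \ {q}))) ⊆
      ⋃ q ∈ {q ∈ Q | ∃ t ∈ T, R q t}, {u | R u q}) :
    T = Set.univ \ ((⋃ q ∈ {q ∈ Q | ¬ ∃ t ∈ T, R q t}, {u | R q u}) ∪
        (⋃ q ∈ {q ∈ Q | ∃ t ∈ T, R q t}, ({u | R u q} \ {q}))) :=
  stmt5_general R htrans hanti T hT Q hPY
end

section
/- Let s, v ∈ V with s → v, and let P ⊆ V be a finite set. Then f({s},P) − f({s}, P \ des(v)) = Σ_{t ∈ P ∩ des(v)} dist(v,t) + dist(s,v) · |P ∩ des(v)|; that is, the No-gain of questioning v when the current Yes-candidate is s equals f({v}, P ∩ des(v)) + dist(s,v) · |P ∩ des(v)|. -/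
open scoped Classical

/-- Pair-wise penalty `f⟨v,t⟩`: `dist(v,t) = depth t - depth v` if `v → t`,
and `dist(r,t) = depth t` otherwise. -/
noncomputable def fpair {V : Type*} (R : V → V → Prop) (depth : V → ℕ) (v t : V) : ℕ :=
  if R v t then depth t - depth v else depth t

/-- Set penalty `f(S,t) = min_{v ∈ S ∪ {r}} f⟨v,t⟩`. -/
noncomputable def fsel {V : Type*} (R : V → V → Prop) (depth : V → ℕ) (r : V)
    (S : Finset V) (t : V) : ℕ :=
  (insert r S).inf' (Finset.insert_nonempty r S) fun v => fpair R depth v t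

/-- Set-wise penalty `f(S,P) = Σ_{t ∈ P} f(S,t)`. -/
noncomputable def fsum {V : Type*} (R : V → V → Prop) (depth : V → ℕ) (r : V)
    (S : Finset V) (P : Finset V) : ℕ :=
  ∑ t ∈ P, fsel R depth r S t

section TreePenalty

variable {V : Type*} (R : V → V → Prop) (depth : V → ℕ) (r : V)

lemma fpair_le_depth (x t : V) : fpair R depth x t ≤ depth t := by
  unfold fpair
  split_ifs
  exacts [Nat.sub_le _ _, le_rfl]

lemma fpair_of_rel {x t : V} (h : R x t) : fpair R depth x t = depth t - depth x :=
  if_pos h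

/-- With `depth r = 0` the root's penalty `depth t` never beats that of another candidate. -/
lemma fsel_singleton (hdepth_root : depth r = 0) (x t : V) :
    fsel R depth r {x} t = fpair R depth x t := by
  have hroot_pair : fpair R depth r t = depth t := by
    unfold fpair
    split_ifs <;> simp [hdepth_root]
  unfold fsel
  rw [Finset.inf'_insert (H := Finset.singleton_nonempty x), Finset.inf'_singleton, hroot_pair]
  exact inf_eq_right.mpr (fpair_le_depth R depth x t)

lemma fsum_singleton_of_forall_rel (hdepth_root : depth r = 0) {x : V} {P : Finset V}
    (hP : ∀ t ∈ P, R x t) :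
    fsum R depth r {x} P = ∑ t ∈ P, (depth t - depth x) :=
  Finset.sum_congr rfl fun t ht => by
    rw [fsel_singleton R depth r hdepth_root, fpair_of_rel R depth (hP t ht)]

lemma fsum_sub_fsum_filter_not (S P : Finset V) (p : V → Prop) :
    (fsum R depth r S P : ℤ) - fsum R depth r S (P.filter fun t => ¬ p t) =
      fsum R depth r S (P.filter p) := by
  rw [sub_eq_iff_eq_add, ← Nat.cast_add]
  exact congrArg _ (Finset.sum_filter_add_sum_filter_not P p _).symm

/-- Termwise, `dist(s,t) = dist(v,t) + dist(s,v)` because `s → v → t`. -/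
lemma fsum_singleton_filter_rel (htrans : ∀ u v w, R u v → R v w → R u w)
    (hdepth_root : depth r = 0) (hdepth_mono : ∀ u v, R u v → depth u ≤ depth v)
    {s v : V} (hsv : R s v) (P : Finset V) :
    fsum R depth r {s} (P.filter fun t => R v t) =
      fsum R depth r {v} (P.filter fun t => R v t) +
        (P.filter fun t => R v t).card * (depth v - depth s) := by
  have hdesc : ∀ t ∈ P.filter (fun t => R v t), R v t := fun t ht => (Finset.mem_filter.mp ht).2
  rw [fsum_singleton_of_forall_rel R depth r hdepth_root hdesc,
    fsum_singleton_of_forall_rel R depth r hdepth_root fun t ht => htrans _ _ _ hsv (hdesc t ht),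
    Finset.card_eq_sum_ones, Finset.sum_mul, one_mul, ← Finset.sum_add_distrib]
  refine Finset.sum_congr rfl fun t ht => ?_
  have hsv_depth := hdepth_mono _ _ hsv
  have hvt_depth := hdepth_mono _ _ (hdesc t ht)
  omega

end TreePenalty

theorem stmt10_general {V : Type*} (R : V → V → Prop) (r : V) (depth : V → ℕ)
    (htrans : ∀ u v w, R u v → R v w → R u w)
    (hdepth_root : depth r = 0)
    (hdepth_mono : ∀ u v, R u v → depth u ≤ depth v)
    (s v : V) (hsv : R s v) (P : Finset V) :
    (fsum R depth r {s} P : ℤ) -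
        (fsum R depth r {s} (P.filter fun t => ¬ R v t) : ℤ) =
      (∑ t ∈ P.filter (fun t => R v t), ((depth t - depth v : ℕ) : ℤ)) +
        ((depth v - depth s : ℕ) : ℤ) * (P.filter fun t => R v t).card ∧
    (fsum R depth r {s} P : ℤ) -
        (fsum R depth r {s} (P.filter fun t => ¬ R v t) : ℤ) =
      (fsum R depth r {v} (P.filter fun t => R v t) : ℤ) +
        ((depth v - depth s : ℕ) : ℤ) * (P.filter fun t => R v t).card := by
  have hfrom_v : fsum R depth r {v} (P.filter fun t => R v t) =
      ∑ t ∈ P.filter (fun t => R v t), (depth t - depth v) :=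
    fsum_singleton_of_forall_rel R depth r hdepth_root fun t ht => (Finset.mem_filter.mp ht).2
  rw [fsum_sub_fsum_filter_not, fsum_singleton_filter_rel R depth r htrans hdepth_root
    hdepth_mono hsv]
  refine ⟨?_, ?_⟩
  · rw [hfrom_v]
    push_cast
    ring
  · push_cast
    ring

/-- for `s → v` and finite `P ⊆ V`,
`f({s},P) − f({s}, P \ des(v)) = Σ_{t ∈ P ∩ des(v)} dist(v,t) + dist(s,v)·|P ∩ des(v)|`,
i.e. this No-gain equals `f({v}, P ∩ des(v)) + dist(s,v)·|P ∩ des(v)|`. -/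
theorem stmt10 {V : Type*} [Fintype V] (R : V → V → Prop) (r : V) (depth : V → ℕ)
    (hrefl : ∀ v, R v v)
    (htrans : ∀ u v w, R u v → R v w → R u w)
    (hanti : ∀ u v, R u v → R v u → u = v)
    (hroot : ∀ v, R r v)
    (hchain : ∀ u v w, R u v → R w v → R u w ∨ R w u)
    (hdepth_root : depth r = 0)
    (hdepth_mono : ∀ u v, R u v → depth u ≤ depth v)
    (hdepth_eq : ∀ u v, R u v → (depth u = depth v ↔ u = v))
    (s v : V) (hsv : R s v) (P : Finset V) :
    (fsum R depth r {s} P : ℤ) -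
        (fsum R depth r {s} (P.filter fun t => ¬ R v t) : ℤ) =
      (∑ t ∈ P.filter (fun t => R v t), ((depth t - depth v : ℕ) : ℤ)) +
        ((depth v - depth s : ℕ) : ℤ) * (P.filter fun t => R v t).card ∧
    (fsum R depth r {s} P : ℤ) -
        (fsum R depth r {s} (P.filter fun t => ¬ R v t) : ℤ) =
      (fsum R depth r {v} (P.filter fun t => R v t) : ℤ) +
        ((depth v - depth s : ℕ) : ℤ) * (P.filter fun t => R v t).card :=
  stmt10_general R r depth htrans hdepth_root hdepth_mono s v hsv P
end

section
/- For every finite set P ⊆ V and every finite set S ⊆ V, f(S,P) ≥ f({r},P) − Σ_{x ∈ S} IG(x), where IG(x) = |P ∩ des(x)| · dist(r,x); that is, the total saving of a selection S over selecting only the root is at most the sum of the selected gains of its members. -/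
open scoped Classical

/-- Selected gain `IG(x) = |P ∩ des(x)| · dist(r,x)` (with `dist(r,x) = depth x`). -/
noncomputable def selGain {V : Type*} (R : V → V → Prop) (depth : V → ℕ)
    (P : Finset V) (x : V) : ℕ :=
  (P.filter fun t => R x t).card * depth x

/-! For each target `t`, the vertex realizing `f(S,t)` is the root, a non-ancestor of `t` (both
cost `depth t`) or a selected ancestor `v` (cost `depth t - depth v`), so `f(S,t)` is at least
`depth t` minus the depths of the selected ancestors of `t`. Summing over `t ∈ P` and exchanging
the two sums turns these subtracted depths into the selected gains. -/

section

variable {V : Type*} (R : V → V → Prop) (depth : V → ℕ)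

theorem depth_le_fpair_add (v t : V) :
    depth t ≤ fpair R depth v t + if R v t then depth v else 0 := by
  unfold fpair
  split_ifs <;> omega

theorem fpair_of_depth_eq_zero {r : V} (hr : depth r = 0) (t : V) :
    fpair R depth r t = depth t := by
  unfold fpair
  split_ifs <;> omega

theorem fsum_singleton_of_depth_eq_zero {r : V} (hr : depth r = 0) (P : Finset V) :
    fsum R depth r {r} P = ∑ t ∈ P, depth t := by
  simp [fsum, fsel, fpair_of_depth_eq_zero R depth hr]

theorem depth_le_fsel_add_sum {r : V} (hr : depth r = 0) (S : Finset V) (t : V) :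
    depth t ≤ fsel R depth r S t + ∑ x ∈ S, if R x t then depth x else 0 := by
  obtain ⟨v, hv, hmin⟩ :=
    Finset.exists_mem_eq_inf' (Finset.insert_nonempty r S) fun v => fpair R depth v t
  rw [fsel, hmin]
  rcases Finset.mem_insert.1 hv with rfl | hvS
  · rw [fpair_of_depth_eq_zero R depth hr]
    omega
  · calc depth t ≤ fpair R depth v t + if R v t then depth v else 0 :=
          depth_le_fpair_add R depth v t
      _ ≤ fpair R depth v t + ∑ x ∈ S, if R x t then depth x else 0 := by
          gcongr
          exact Finset.single_le_sum (f := fun x => if R x t then depth x else 0)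
            (fun _ _ => Nat.zero_le _) hvS

theorem sum_ite_eq_selGain (P : Finset V) (x : V) :
    ∑ t ∈ P, (if R x t then depth x else 0) = selGain R depth P x := by
  rw [← Finset.sum_filter, Finset.sum_const, smul_eq_mul, selGain]

theorem sum_depth_le_fsum_add_sum_selGain {r : V} (hr : depth r = 0) (P S : Finset V) :
    ∑ t ∈ P, depth t ≤ fsum R depth r S P + ∑ x ∈ S, selGain R depth P x :=
  calc ∑ t ∈ P, depth t
      ≤ ∑ t ∈ P, (fsel R depth r S t + ∑ x ∈ S, if R x t then depth x else 0) :=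
        Finset.sum_le_sum fun t _ => depth_le_fsel_add_sum R depth hr S t
    _ = fsum R depth r S P + ∑ x ∈ S, selGain R depth P x := by
        rw [Finset.sum_add_distrib, Finset.sum_comm]
        simp only [fsum, sum_ite_eq_selGain]

end

theorem stmt11_general {V : Type*} (R : V → V → Prop) (r : V) (depth : V → ℕ)
    (hdepth_root : depth r = 0)
    (P S : Finset V) :
    (fsum R depth r S P : ℤ) ≥
      (fsum R depth r {r} P : ℤ) - ∑ x ∈ S, (selGain R depth P x : ℤ) := by
  have key : ((∑ t ∈ P, depth t : ℕ) : ℤ) ≤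
      fsum R depth r S P + ∑ x ∈ S, (selGain R depth P x : ℤ) := by
    exact_mod_cast sum_depth_le_fsum_add_sum_selGain R depth hdepth_root P S
  rw [fsum_singleton_of_depth_eq_zero R depth hdepth_root]
  linarith

/-- for all finite `P, S ⊆ V`,
`f(S,P) ≥ f({r},P) − Σ_{x ∈ S} IG(x)`. -/
theorem stmt11 {V : Type*} [Fintype V] (R : V → V → Prop) (r : V) (depth : V → ℕ)
    (hrefl : ∀ v, R v v)
    (htrans : ∀ u v w, R u v → R v w → R u w)
    (hanti : ∀ u v, R u v → R v u → u = v)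
    (hroot : ∀ v, R r v)
    (hchain : ∀ u v w, R u v → R w v → R u w ∨ R w u)
    (hdepth_root : depth r = 0)
    (hdepth_mono : ∀ u v, R u v → depth u ≤ depth v)
    (hdepth_eq : ∀ u v, R u v → (depth u = depth v ↔ u = v))
    (P S : Finset V) :
    (fsum R depth r S P : ℤ) ≥
      (fsum R depth r {r} P : ℤ) - ∑ x ∈ S, (selGain R depth P x : ℤ) :=
  stmt11_general R r depth hdepth_root P S
end

section
/- For every finite nonempty set Y ⊆ V and every finite set P ⊆ V, the approximate potential penalty with k = 1 coincides with the exact potential penalty: g'(Y,P,1) = g(Y,P,1). -/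
/-! With a single selected vertex `x`, a target `t` below `x` is charged `depth t - depth x`
instead of `depth t`, and every other target is charged `depth t` as without selection.
Hence `f({x},P) + IG(x) = f({r},P)`, and minimising `f({x},P)` over `x ∈ Y` is the same as
maximising `IG(x)`. -/

open scoped Classical

/-- Potential penalty `g(Y,P,k) = min { f(S,P) : S ⊆ Y, S nonempty, |S| ≤ k }`. -/
noncomputable def gpen {V : Type*} (R : V → V → Prop) (depth : V → ℕ) (r : V)
    (Y P : Finset V) (k : ℕ) : ℕ :=
  sInf {n : ℕ | ∃ S : Finset V, S ⊆ Y ∧ S.Nonempty ∧ S.card ≤ k ∧ n = fsum R depth r S P}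

/-- Approximate potential penalty
`g'(Y,P,k) = f({r},P) − max { Σ_{x ∈ S} IG(x) : S ⊆ Y, S nonempty, |S| ≤ k }`
(as an integer, since the subtraction may be negative). -/
noncomputable def gapprox {V : Type*} (R : V → V → Prop) (depth : V → ℕ) (r : V)
    (Y P : Finset V) (k : ℕ) : ℤ :=
  (fsum R depth r {r} P : ℤ) -
    sSup {m : ℤ | ∃ S : Finset V, S ⊆ Y ∧ S.Nonempty ∧ S.card ≤ k ∧
      m = ∑ x ∈ S, (selGain R depth P x : ℤ)}


theorem setOf_subset_nonempty_card_le_one_eq_image {α β : Type*} (Y : Finset α)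
    (F : Finset α → β) :
    {b | ∃ S : Finset α, S ⊆ Y ∧ S.Nonempty ∧ S.card ≤ 1 ∧ b = F S} =
      (fun x => F {x}) '' (Y : Set α) := by
  ext b
  constructor
  · rintro ⟨S, hSY, hS, hS1, rfl⟩
    obtain ⟨x, rfl⟩ := Finset.card_eq_one.mp (le_antisymm hS1 hS.card_pos)
    exact ⟨x, Finset.singleton_subset_iff.mp hSY, rfl⟩
  · rintro ⟨x, hx, rfl⟩
    exact ⟨{x}, Finset.singleton_subset_iff.mpr hx, Finset.singleton_nonempty x,
      (Finset.card_singleton x).le, rfl⟩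

theorem Finset.inf'_sub_eq_sub_sup' {ι α : Type*} [AddCommGroup α] [LinearOrder α]
    [IsOrderedAddMonoid α] {s : Finset ι} (hs : s.Nonempty) (c : α) (g : ι → α) :
    s.inf' hs (fun i => c - g i) = c - s.sup' hs g := by
  obtain ⟨i, hi, hmax⟩ := s.exists_mem_eq_sup' hs g
  refine le_antisymm ?_ (Finset.le_inf' _ _ fun j hj => sub_le_sub_left (s.le_sup' g hj) c)
  rw [hmax]
  exact s.inf'_le _ hi

section SingletonSelection

variable {V : Type*} (R : V → V → Prop) (depth : V → ℕ) (r : V)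

theorem selGain_eq_sum_ite (P : Finset V) (x : V) :
    selGain R depth P x = ∑ t ∈ P, if R x t then depth x else 0 := by
  rw [selGain, ← Finset.sum_filter, Finset.sum_const, smul_eq_mul]

theorem gpen_one_eq_inf' {Y : Finset V} (hY : Y.Nonempty) (P : Finset V) :
    gpen R depth r Y P 1 = Y.inf' hY fun x => fsum R depth r {x} P := by
  rw [gpen, setOf_subset_nonempty_card_le_one_eq_image, Finset.inf'_eq_csInf_image]

theorem gapprox_one_eq_sub_sup' {Y : Finset V} (hY : Y.Nonempty) (P : Finset V) :
    gapprox R depth r Y P 1 =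
      fsum R depth r {r} P - Y.sup' hY fun x => (selGain R depth P x : ℤ) := by
  rw [gapprox, setOf_subset_nonempty_card_le_one_eq_image, Finset.sup'_eq_csSup_image]
  simp only [Finset.sum_singleton]

variable {R depth r}

theorem fsel_singleton_add_ite (hroot : ∀ v, R r v) (hdepth_root : depth r = 0)
    (hdepth_mono : ∀ u v, R u v → depth u ≤ depth v) (x t : V) :
    fsel R depth r {x} t + (if R x t then depth x else 0) = depth t := by
  have hroot_t : fpair R depth r t = depth t := by simp [fpair, hroot t, hdepth_root]
  rw [fsel, Finset.inf'_insert (Finset.singleton_nonempty x), Finset.inf'_singleton, hroot_t,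
    fpair]
  split_ifs with hxt
  · have := hdepth_mono x t hxt
    omega
  · simp

theorem fsum_singleton_add_selGain (hroot : ∀ v, R r v) (hdepth_root : depth r = 0)
    (hdepth_mono : ∀ u v, R u v → depth u ≤ depth v) (P : Finset V) (x : V) :
    fsum R depth r {x} P + selGain R depth P x = fsum R depth r {r} P := by
  rw [selGain_eq_sum_ite, fsum, fsum, ← Finset.sum_add_distrib]
  refine Finset.sum_congr rfl fun t _ => ?_
  have hr := fsel_singleton_add_ite hroot hdepth_root hdepth_mono r t
  rw [if_pos (hroot t), hdepth_root, add_zero] at hr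
  rw [fsel_singleton_add_ite hroot hdepth_root hdepth_mono, hr]

end SingletonSelection

theorem stmt15_general {V : Type*} (R : V → V → Prop) (r : V) (depth : V → ℕ)
    (hroot : ∀ v, R r v)
    (hdepth_root : depth r = 0)
    (hdepth_mono : ∀ u v, R u v → depth u ≤ depth v)
    (Y P : Finset V) (hY : Y.Nonempty) :
    gapprox R depth r Y P 1 = (gpen R depth r Y P 1 : ℤ) := by
  have hsum : ∀ x, (fsum R depth r {x} P : ℤ) =
      fsum R depth r {r} P - selGain R depth P x := fun x => by
    rw [eq_sub_iff_add_eq]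
    exact_mod_cast fsum_singleton_add_selGain hroot hdepth_root hdepth_mono P x
  rw [gapprox_one_eq_sub_sup' R depth r hY, gpen_one_eq_inf' R depth r hY,
    Finset.apply_inf'_eq_inf'_comp hY _ fun a b => Nat.cast_min a b, Function.comp_def,
    Finset.inf'_congr hY rfl fun x _ => hsum x, Finset.inf'_sub_eq_sub_sup']

/-- for every finite nonempty `Y ⊆ V` and finite `P ⊆ V`, the
approximate potential penalty with `k = 1` coincides with the exact one:
`g'(Y,P,1) = g(Y,P,1)`. -/
theorem stmt15 {V : Type*} [Fintype V] (R : V → V → Prop) (r : V) (depth : V → ℕ)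
    (hrefl : ∀ v, R v v)
    (htrans : ∀ u v w, R u v → R v w → R u w)
    (hanti : ∀ u v, R u v → R v u → u = v)
    (hroot : ∀ v, R r v)
    (hchain : ∀ u v w, R u v → R w v → R u w ∨ R w u)
    (hdepth_root : depth r = 0)
    (hdepth_mono : ∀ u v, R u v → depth u ≤ depth v)
    (hdepth_eq : ∀ u v, R u v → (depth u = depth v ↔ u = v))
    (Y P : Finset V) (hY : Y.Nonempty) :
    gapprox R depth r Y P 1 = (gpen R depth r Y P 1 : ℤ) :=
  stmt15_general R r depth hroot hdepth_root hdepth_mono Y P hY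
end
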